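/- arXiv:2603.23926 — 2 statements merged into one kernel-verified Lean document; each statement's English description precedes it below -/
import Mathlib

section
/- The clipped optimistic empirical Bellman operator is a γ-contraction in the supremum norm: for all Q, Q' : S×A → ℝ, sup_{(s,a)} |(T̂Q)(s,a) − (T̂Q')(s,a)| ≤ γ · sup_{(s,a)} |Q(s,a) − Q'(s,a)|. -/
open Finset

/-- Dot product of a probability vector `p` with a value vector `v`. -/
noncomputable def probDot {S : Type*} [Fintype S] (p v : S → ℝ) : ℝ :=
  ∑ s, p s * v s

/-- Variance of `v` under the probability vector `p`. -/
noncomputable def probVar {S : Type*} [Fintype S] (p v : S → ℝ) : ℝ :=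
  (∑ s, p s * (v s) ^ 2) - (probDot p v) ^ 2

/-- `(MQ)(s) = max_a Q(s,a)`. -/
noncomputable def maxOp {S A : Type*} [Fintype A] [Nonempty A] (Q : S → A → ℝ) (s : S) : ℝ :=
  Finset.univ.sup' Finset.univ_nonempty (Q s)

/-- `Clip_H(V)(s) = min (V s) (min_{s'} V s' + H)`. -/
noncomputable def clipOp {S : Type*} [Fintype S] [Nonempty S] (H : ℝ) (V : S → ℝ) (s : S) : ℝ :=
  min (V s) (Finset.univ.inf' Finset.univ_nonempty V + H)

/-- The exploration bonus `b(s,a,V)`. -/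
noncomputable def bonus {S A : Type*} [Fintype S] (Phat : S → A → S → ℝ)
    (cnt : S → A → ℝ) (U H : ℝ) (s : S) (a : A) (V : S → ℝ) : ℝ :=
  max (4 * Real.sqrt (probVar (Phat s a) V * U / cnt s a)) (32 * H * U / cnt s a)

/-- The clipped optimistic empirical Bellman operator `T̂`. -/
noncomputable def bellmanOp {S A : Type*} [Fintype S] [Fintype A] [Nonempty S] [Nonempty A]
    (γ H U : ℝ) (r : S → A → ℝ) (cnt : S → A → ℝ) (Phat : S → A → S → ℝ)
    (Q : S → A → ℝ) : S → A → ℝ := fun s a =>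
  r s a + γ * probDot (Phat s a) (clipOp H (maxOp Q))
    + γ * bonus Phat cnt U H s a (clipOp H (maxOp Q))

/-!
Maximisation over actions, clipping and averaging under `P̂` are all 1-Lipschitz for the sup norm;
the bonus is not, and the point is that it can only grow by the slack the average leaves. Suppose
`V ≤ V' + m`. Clipping confines `V = Clip_H(MQ)` to an interval of length `H`, so
`Var V - Var V' = 2 Cov(V, V - V') - Var(V - V') ≤ 2 H (m - P̂·(V - V'))`.
The variance branch `c √Var` of the bonus exceeds the floor `2 H c²` only when `√Var > 2 H c`,
and there the variance bound turns into `c (√Var V - √Var V') ≤ m - P̂·(V - V')`.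
Hence `P̂·V + b(V) ≤ P̂·V' + b(V') + m`, and multiplying by `γ` gives the contraction.
-/

section ProbabilityVector

variable {S : Type*} [Fintype S] {p : S → ℝ}

lemma probDot_sub (v w : S → ℝ) : probDot p v - probDot p w = probDot p (v - w) := by
  simp only [probDot, Pi.sub_apply, mul_sub, Finset.sum_sub_distrib]

lemma probDot_le_of_forall_le (hp0 : ∀ s, 0 ≤ p s) (hp1 : ∑ s, p s = 1) {v : S → ℝ} {c : ℝ}
    (h : ∀ s, v s ≤ c) : probDot p v ≤ c :=
  calc probDot p v ≤ ∑ s, p s * c :=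
        Finset.sum_le_sum fun s _ => mul_le_mul_of_nonneg_left (h s) (hp0 s)
    _ = c := by rw [← Finset.sum_mul, hp1, one_mul]

lemma probVar_eq_sum_sq (hp1 : ∑ s, p s = 1) (v : S → ℝ) :
    probVar p v = ∑ s, p s * (v s - probDot p v) ^ 2 := by
  have hexpand : ∑ s, p s * (v s - probDot p v) ^ 2 = ∑ s, p s * v s ^ 2
      - 2 * probDot p v * ∑ s, p s * v s + probDot p v ^ 2 * ∑ s, p s := by
    simp only [Finset.mul_sum, ← Finset.sum_sub_distrib, ← Finset.sum_add_distrib]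
    exact Finset.sum_congr rfl fun s _ => by ring
  rw [hexpand, hp1, probVar, probDot]
  ring

lemma probVar_nonneg (hp0 : ∀ s, 0 ≤ p s) (hp1 : ∑ s, p s = 1) (v : S → ℝ) :
    0 ≤ probVar p v := by
  rw [probVar_eq_sum_sq hp1]
  exact Finset.sum_nonneg fun s _ => mul_nonneg (hp0 s) (sq_nonneg _)

/-- The covariance `Cov(v, v - v')` appears as `E[(μ - v)(m - (v - v'))]`, whose factors are
bounded by `H` and nonnegative when `v` oscillates by at most `H` and `v ≤ v' + m`. -/
lemma probVar_sub_probVar (hp1 : ∑ s, p s = 1) (v v' : S → ℝ) (m : ℝ) :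
    probVar p v - probVar p v' = 2 * ∑ s, p s * ((probDot p v - v s) * (m - (v s - v' s)))
      - probVar p (v - v') := by
  set μ := probDot p v
  have hcov : ∑ s, p s * ((μ - v s) * (m - (v s - v' s))) = μ * m * ∑ s, p s
      - μ * ∑ s, p s * v s + μ * ∑ s, p s * v' s - m * ∑ s, p s * v s
      + ∑ s, p s * v s ^ 2 - ∑ s, p s * (v s * v' s) := by
    simp only [Finset.mul_sum, ← Finset.sum_sub_distrib, ← Finset.sum_add_distrib]
    exact Finset.sum_congr rfl fun s _ => by ring
  have hsq : ∑ s, p s * (v - v') s ^ 2 = ∑ s, p s * v s ^ 2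
      - 2 * ∑ s, p s * (v s * v' s) + ∑ s, p s * v' s ^ 2 := by
    simp only [Finset.mul_sum, ← Finset.sum_sub_distrib, ← Finset.sum_add_distrib]
    exact Finset.sum_congr rfl fun s _ => by simp only [Pi.sub_apply]; ring
  rw [hcov, probVar, probVar, probVar, hsq, ← probDot_sub, hp1]
  simp only [μ, probDot]
  ring

lemma probVar_sub_probVar_le (hp0 : ∀ s, 0 ≤ p s) (hp1 : ∑ s, p s = 1) {v v' : S → ℝ}
    {H m : ℝ} (hosc : ∀ s t, v t ≤ v s + H) (hle : ∀ s, v s ≤ v' s + m) :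
    probVar p v - probVar p v' ≤ 2 * H * (m - (probDot p v - probDot p v')) := by
  have hcov : ∑ s, p s * ((probDot p v - v s) * (m - (v s - v' s)))
      ≤ ∑ s, p s * (H * (m - (v s - v' s))) := by
    refine Finset.sum_le_sum fun s _ => mul_le_mul_of_nonneg_left ?_ (hp0 s)
    refine mul_le_mul_of_nonneg_right ?_ (by linarith [hle s])
    linarith [probDot_le_of_forall_le hp0 hp1 (hosc s)]
  have hslack : ∑ s, p s * (H * (m - (v s - v' s)))
      = H * (m - (probDot p v - probDot p v')) := by
    simp only [probDot, mul_left_comm _ H, ← Finset.mul_sum, mul_sub,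
      Finset.sum_sub_distrib, ← Finset.sum_mul, hp1]
    ring
  rw [probVar_sub_probVar hp1 v v' m]
  linarith [probVar_nonneg hp0 hp1 (v - v')]

end ProbabilityVector

/-- Off the floor, `√x > 2 H c`, so `c (√x - √x') ≤ c (x - x') / √x ≤ δ`. -/
lemma max_mul_sqrt_sub_le {x x' c H δ : ℝ} (hx' : 0 ≤ x') (hH : 0 ≤ H) (hδ : 0 ≤ δ)
    (hxx' : x - x' ≤ 2 * H * δ) :
    max (c * √x) (2 * H * c ^ 2) - max (c * √x') (2 * H * c ^ 2) ≤ δ := by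
  rcases le_or_gt (c * √x) (2 * H * c ^ 2) with hfloor | habove
  · rw [max_eq_right hfloor]
    linarith [le_max_right (c * √x') (2 * H * c ^ 2)]
  rw [max_eq_left habove.le]
  refine (sub_le_sub_left (le_max_left _ _) _).trans ?_
  have hc : 0 < c := by
    by_contra! hc
    nlinarith [mul_nonpos_of_nonpos_of_nonneg hc (Real.sqrt_nonneg x), sq_nonneg c]
  have hbig : 2 * H * c < √x := by nlinarith
  rcases le_or_gt √x √x' with hmono | hdrop
  · nlinarith
  have hx : 0 ≤ x := Real.sqrt_pos.mp (lt_of_le_of_lt (Real.sqrt_nonneg x') hdrop) |>.le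
  have hgap : (√x - √x') * √x ≤ 2 * H * δ :=
    calc (√x - √x') * √x ≤ (√x - √x') * (√x + √x') := by nlinarith [Real.sqrt_nonneg x']
      _ = x - x' := by nlinarith [Real.sq_sqrt hx, Real.sq_sqrt hx']
      _ ≤ 2 * H * δ := hxx'
  refine le_of_mul_le_mul_right ?_ (hbig.trans_le' (by positivity))
  calc (c * √x - c * √x') * √x = c * ((√x - √x') * √x) := by ring
    _ ≤ c * (2 * H * δ) := mul_le_mul_of_nonneg_left hgap hc.le
    _ = (2 * H * c) * δ := by ring
    _ ≤ √x * δ := mul_le_mul_of_nonneg_right hbig.le hδ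
    _ = δ * √x := mul_comm _ _

section BellmanOperator

variable {S A : Type*}

lemma maxOp_le_maxOp_add [Fintype A] [Nonempty A] {Q Q' : S → A → ℝ} {m : ℝ}
    (h : ∀ s a, Q s a ≤ Q' s a + m) (s : S) :
    maxOp Q s ≤ maxOp Q' s + m :=
  Finset.sup'_le _ _ fun a _ =>
    (h s a).trans (add_le_add_left (Finset.le_sup' _ (Finset.mem_univ a)) m)

lemma clipOp_le_clipOp_add [Fintype S] [Nonempty S] {H m : ℝ} {V V' : S → ℝ}
    (h : ∀ s, V s ≤ V' s + m) (s : S) :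
    clipOp H V s ≤ clipOp H V' s + m := by
  have hinf : Finset.univ.inf' Finset.univ_nonempty V
      ≤ Finset.univ.inf' Finset.univ_nonempty V' + m := by
    rw [← sub_le_iff_le_add]
    exact Finset.le_inf' _ _ fun t _ =>
      sub_le_iff_le_add.mpr ((Finset.inf'_le _ (Finset.mem_univ t)).trans (h t))
  rw [clipOp, clipOp, ← min_add_add_right]
  exact min_le_min (h s) (by linarith)

lemma clipOp_le_clipOp_add_H [Fintype S] [Nonempty S] {H : ℝ} (hH : 0 ≤ H) (V : S → ℝ)
    (s t : S) :
    clipOp H V t ≤ clipOp H V s + H := by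
  have hfloor : Finset.univ.inf' Finset.univ_nonempty V ≤ clipOp H V s :=
    le_min (Finset.inf'_le _ (Finset.mem_univ s)) (le_add_of_nonneg_right hH)
  exact (min_le_right _ _).trans (by linarith)

lemma bonus_eq_max [Fintype S] (Phat : S → A → S → ℝ) (cnt : S → A → ℝ) {U : ℝ} (H : ℝ)
    (hU : 0 ≤ U) {s : S} {a : A} (hn : 0 ≤ cnt s a) (V : S → ℝ) :
    bonus Phat cnt U H s a V = max (4 * √(U / cnt s a) * √(probVar (Phat s a) V))
      (2 * H * (4 * √(U / cnt s a)) ^ 2) := by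
  rw [bonus, mul_div_assoc, Real.sqrt_mul' _ (div_nonneg hU hn), mul_pow,
    Real.sq_sqrt (div_nonneg hU hn)]
  congr 1 <;> ring

lemma probDot_add_bonus_le [Fintype S] (Phat : S → A → S → ℝ) (cnt : S → A → ℝ) {U H m : ℝ}
    (hH : 0 ≤ H) (hU : 0 ≤ U) {s : S} {a : A} (hn : 0 ≤ cnt s a)
    (hp0 : ∀ t, 0 ≤ Phat s a t) (hp1 : ∑ t, Phat s a t = 1) {V V' : S → ℝ}
    (hosc : ∀ t t', V t' ≤ V t + H) (hle : ∀ t, V t ≤ V' t + m) :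
    probDot (Phat s a) V + bonus Phat cnt U H s a V
      ≤ probDot (Phat s a) V' + bonus Phat cnt U H s a V' + m := by
  have hslack : probDot (Phat s a) V - probDot (Phat s a) V' ≤ m := by
    rw [probDot_sub]
    exact probDot_le_of_forall_le hp0 hp1 fun t => sub_le_iff_le_add'.mpr (hle t)
  have hbonus : bonus Phat cnt U H s a V - bonus Phat cnt U H s a V'
      ≤ m - (probDot (Phat s a) V - probDot (Phat s a) V') := by
    rw [bonus_eq_max Phat cnt H hU hn, bonus_eq_max Phat cnt H hU hn]
    exact max_mul_sqrt_sub_le (probVar_nonneg hp0 hp1 V') hH (sub_nonneg.mpr hslack)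
      (probVar_sub_probVar_le hp0 hp1 hosc hle)
  linarith

lemma bellmanOp_le_bellmanOp_add [Fintype S] [Fintype A] [Nonempty S] [Nonempty A]
    {γ H U m : ℝ} (hγ : 0 ≤ γ) (hH : 0 ≤ H) (hU : 0 ≤ U) (r cnt : S → A → ℝ)
    (hcnt : ∀ s a, 0 ≤ cnt s a) (Phat : S → A → S → ℝ) (hP0 : ∀ s a t, 0 ≤ Phat s a t)
    (hP1 : ∀ s a, ∑ t, Phat s a t = 1) {Q Q' : S → A → ℝ} (h : ∀ s a, Q s a ≤ Q' s a + m)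
    (s : S) (a : A) :
    bellmanOp γ H U r cnt Phat Q s a ≤ bellmanOp γ H U r cnt Phat Q' s a + γ * m := by
  have hstep := probDot_add_bonus_le Phat cnt hH hU (hcnt s a) (hP0 s a) (hP1 s a)
    (clipOp_le_clipOp_add_H hH (maxOp Q)) (clipOp_le_clipOp_add (maxOp_le_maxOp_add h))
  simp only [bellmanOp]
  linarith [mul_le_mul_of_nonneg_left hstep hγ]

end BellmanOperator

theorem bellmanOp_contraction_general
    {S A : Type*} [Fintype S] [Fintype A] [Nonempty S] [Nonempty A]
    (γ H U : ℝ) (hγ₀ : 0 < γ) (hH : 0 ≤ H) (hU : 0 < U)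
    (r : S → A → ℝ)
    (cnt : S → A → ℝ) (hcnt : ∀ s a, 1 ≤ cnt s a)
    (Phat : S → A → S → ℝ)
    (hPnonneg : ∀ s a s', 0 ≤ Phat s a s')
    (hPsum : ∀ s a, ∑ s', Phat s a s' = 1)
    (Q Q' : S → A → ℝ) :
    Finset.univ.sup' Finset.univ_nonempty
        (fun p : S × A =>
          |bellmanOp γ H U r cnt Phat Q p.1 p.2 - bellmanOp γ H U r cnt Phat Q' p.1 p.2|)
      ≤ γ * Finset.univ.sup' Finset.univ_nonempty
          (fun p : S × A => |Q p.1 p.2 - Q' p.1 p.2|) := by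
  set M := Finset.univ.sup' Finset.univ_nonempty (fun p : S × A => |Q p.1 p.2 - Q' p.1 p.2|)
  have hM : ∀ s a, |Q s a - Q' s a| ≤ M := fun s a =>
    Finset.le_sup' (fun p : S × A => |Q p.1 p.2 - Q' p.1 p.2|) (Finset.mem_univ (s, a))
  have hcnt₀ : ∀ s a, 0 ≤ cnt s a := fun s a => zero_le_one.trans (hcnt s a)
  have hbellman (Q₁ Q₂ : S → A → ℝ) (h : ∀ s a, Q₁ s a ≤ Q₂ s a + M) :
      ∀ s a, bellmanOp γ H U r cnt Phat Q₁ s a ≤ bellmanOp γ H U r cnt Phat Q₂ s a + γ * M :=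
    bellmanOp_le_bellmanOp_add hγ₀.le hH hU.le r cnt hcnt₀ Phat hPnonneg hPsum h
  have hle := hbellman Q Q' fun s a => by linarith [(abs_le.mp (hM s a)).2]
  have hge := hbellman Q' Q fun s a => by linarith [(abs_le.mp (hM s a)).1]
  refine Finset.sup'_le _ _ fun ⟨s, a⟩ _ => abs_sub_le_iff.mpr ⟨?_, ?_⟩
  · linarith [hle s a]
  · linarith [hge s a]

/-- The clipped optimistic empirical Bellman operator is a `γ`-contraction in
the supremum norm over the (finite) set of state-action pairs. -/
theorem bellmanOp_contraction
    {S A : Type*} [Fintype S] [Fintype A] [Nonempty S] [Nonempty A]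
    (γ H U : ℝ) (hγ₀ : 0 < γ) (hγ₁ : γ < 1) (hH : 0 ≤ H) (hU : 0 < U)
    (r : S → A → ℝ) (hr : ∀ s a, r s a ∈ Set.Icc (0 : ℝ) 1)
    (cnt : S → A → ℝ) (hcnt : ∀ s a, 1 ≤ cnt s a)
    (Phat : S → A → S → ℝ)
    (hPnonneg : ∀ s a s', 0 ≤ Phat s a s')
    (hPle : ∀ s a s', Phat s a s' ≤ 1)
    (hPsum : ∀ s a, ∑ s', Phat s a s' = 1)
    (Q Q' : S → A → ℝ) :
    Finset.univ.sup' Finset.univ_nonempty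
        (fun p : S × A =>
          |bellmanOp γ H U r cnt Phat Q p.1 p.2 - bellmanOp γ H U r cnt Phat Q' p.1 p.2|)
      ≤ γ * Finset.univ.sup' Finset.univ_nonempty
          (fun p : S × A => |Q p.1 p.2 - Q' p.1 p.2|) :=
  bellmanOp_contraction_general γ H U hγ₀ hH hU r cnt hcnt Phat hPnonneg hPsum Q Q'
end

section
/- The iterates of the clipped optimistic empirical Bellman operator started from zero are pointwise nondecreasing: for every k ≥ 0, T̂^k(0) ≤ T̂^{k+1}(0) pointwise on S×A, where 0 denotes the zero function. Consequently, for every m ≥ 0, writing Q̂ = T̂^m(0) and V̂ = Clip_H(MQ̂), for every s ∈ S and every a ∈ A with Q̂(s,a) = max_{a'∈A} Q̂(s,a'), one has V̂(s) ≤ r(s,a) + γ·(P̂_{s,a}·V̂) + γ·b(s,a,V̂). -/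
open Finset

section Aux

variable {S A : Type*} [Fintype S] [Fintype A] [Nonempty S] [Nonempty A]

set_option linter.unusedSectionVars false

lemma probDot_le_add' (p V : S → ℝ) (hp : ∀ s, 0 ≤ p s) (hsum : ∑ s, p s = 1) {H : ℝ}
    (hosc : ∀ s s', V s ≤ V s' + H) (s : S) : (∑ s', p s' * V s') ≤ V s + H := by
  calc (∑ s', p s' * V s') ≤ ∑ s', p s' * (V s + H) :=
        Finset.sum_le_sum fun s' _ => mul_le_mul_of_nonneg_left (hosc s' s) (hp s')
    _ = V s + H := by rw [← Finset.sum_mul, hsum, one_mul]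

lemma probVar_nonneg' (p V : S → ℝ) (hp : ∀ s, 0 ≤ p s) (hsum : ∑ s, p s = 1) :
    0 ≤ probVar p V := by
  have h : ∀ s ∈ univ, p s * (V s - ∑ s', p s' * V s')^2
      = p s * V s ^2 - 2 * (∑ s', p s' * V s') * (p s * V s) + (∑ s', p s' * V s')^2 * p s :=
    fun s _ => by ring
  have h2 : (∑ s, p s * (V s - ∑ s', p s' * V s')^2)
      = (∑ s, p s * (V s)^2) - (∑ s, p s * V s)^2 := by
    rw [Finset.sum_congr rfl h, Finset.sum_add_distrib, Finset.sum_sub_distrib,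
      ← Finset.mul_sum, ← Finset.mul_sum, hsum]
    ring
  have h3 : 0 ≤ ∑ s, p s * (V s - ∑ s', p s' * V s')^2 :=
    Finset.sum_nonneg fun s _ => mul_nonneg (hp s) (sq_nonneg _)
  rw [h2] at h3
  simpa [probVar, probDot] using h3

lemma var_compare' (p V V' : S → ℝ) (hp : ∀ s, 0 ≤ p s) (hsum : ∑ s, p s = 1) {H : ℝ}
    (hle : ∀ s, V s ≤ V' s)
    (hoV : ∀ s s', V s ≤ V s' + H) (hoV' : ∀ s s', V' s ≤ V' s' + H) :
    probVar p V ≤ probVar p V' + 2*H*(probDot p V' - probDot p V) := by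
  have hxeq : (∑ s, (p s * V' s - p s * V s)) = (∑ s, p s * V' s) - (∑ s, p s * V s) :=
    Finset.sum_sub_distrib _ _
  have h : ∀ s ∈ univ, p s * (V' s - V s) * ((V' s + V s + 2*H) - ((∑ s', p s' * V' s') + (∑ s', p s' * V s')))
      = (p s * (V' s)^2 - p s * (V s)^2)
        + (2*H - ((∑ s', p s' * V' s') + (∑ s', p s' * V s'))) * (p s * V' s - p s * V s) :=
    fun s _ => by ring
  have key : (∑ s, p s * (V' s - V s) * ((V' s + V s + 2*H) - ((∑ s', p s' * V' s') + (∑ s', p s' * V s'))))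
      = ((∑ s, p s * (V' s)^2) - (∑ s, p s * (V s)^2))
        + (2*H - ((∑ s', p s' * V' s') + (∑ s', p s' * V s')))
            * ((∑ s, p s * V' s) - (∑ s, p s * V s)) := by
    rw [Finset.sum_congr rfl h, Finset.sum_add_distrib, Finset.sum_sub_distrib,
      ← Finset.mul_sum, hxeq]
  have hnn : 0 ≤ ∑ s, p s * (V' s - V s) * ((V' s + V s + 2*H) - ((∑ s', p s' * V' s') + (∑ s', p s' * V s'))) := by
    refine Finset.sum_nonneg fun s _ => mul_nonneg (mul_nonneg (hp s) (by linarith [hle s])) ?_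
    have h1 := probDot_le_add' p V hp hsum hoV s
    have h2 := probDot_le_add' p V' hp hsum hoV' s
    linarith
  rw [key] at hnn
  simp only [probVar, probDot]
  nlinarith [hnn]

lemma bonus_le' (t H x a b : ℝ) (ht : 0 < t) (hH : 0 ≤ H) (hx : 0 ≤ x)
    (ha : 0 ≤ a) (hb : 0 ≤ b) (hab : a ≤ b + 2*H*x) :
    max (4*Real.sqrt (a*t)) (32*H*t) ≤ x + max (4*Real.sqrt (b*t)) (32*H*t) := by
  rcases le_or_gt (4*Real.sqrt (a*t)) (32*H*t) with h | h
  · have h2 : (32*H*t) ≤ x + max (4*Real.sqrt (b*t)) (32*H*t) :=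
      le_add_of_nonneg_of_le hx (le_max_right _ _)
    exact max_le (h.trans h2) h2
  · have hsa : 8*H*t < Real.sqrt (a*t) := by linarith
    have hsa0 : 0 < Real.sqrt (a*t) := lt_of_le_of_lt (by positivity) hsa
    have ha2 : Real.sqrt (a*t)^2 = a*t := Real.sq_sqrt (by positivity)
    have hb2 : Real.sqrt (b*t)^2 = b*t := Real.sq_sqrt (by positivity)
    have hsb0 : 0 ≤ Real.sqrt (b*t) := Real.sqrt_nonneg _
    have key : 4*(Real.sqrt (a*t) - Real.sqrt (b*t)) ≤ x := by
      nlinarith [mul_le_mul_of_nonneg_left hsa.le hx,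
        mul_le_mul_of_nonneg_right hab ht.le]
    have h3 := le_max_left (4*Real.sqrt (b*t)) (32*H*t)
    refine max_le (by linarith) ?_
    have := le_max_right (4*Real.sqrt (b*t)) (32*H*t)
    linarith

lemma clipOp_osc (H : ℝ) (hH : 0 ≤ H) (V : S → ℝ) (s s' : S) :
    clipOp H V s ≤ clipOp H V s' + H := by
  unfold clipOp
  have h1 : Finset.univ.inf' Finset.univ_nonempty V ≤ V s' :=
    Finset.inf'_le _ (mem_univ s')
  have h2 : Finset.univ.inf' Finset.univ_nonempty V
      ≤ min (V s') (Finset.univ.inf' Finset.univ_nonempty V + H) := le_min h1 (by linarith)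
  calc min (V s) (Finset.univ.inf' Finset.univ_nonempty V + H)
      ≤ Finset.univ.inf' Finset.univ_nonempty V + H := min_le_right _ _
    _ ≤ _ := by linarith

lemma clipOp_mono (H : ℝ) {V V' : S → ℝ} (h : ∀ s, V s ≤ V' s) (s : S) :
    clipOp H V s ≤ clipOp H V' s := by
  unfold clipOp
  refine min_le_min (h s) (add_le_add ?_ le_rfl)
  refine Finset.le_inf' _ _ fun b _ => ?_
  exact (Finset.inf'_le _ (mem_univ b)).trans (h b)

lemma maxOp_mono {Q Q' : S → A → ℝ} (h : ∀ s a, Q s a ≤ Q' s a) (s : S) :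
    maxOp Q s ≤ maxOp Q' s := by
  unfold maxOp
  exact Finset.sup'_le _ _ fun a _ => (h s a).trans (Finset.le_sup' (Q' s) (mem_univ a))

/-- Monotonicity of the clipped optimistic empirical Bellman operator. -/
lemma bellmanOp_mono (γ H U : ℝ) (hγ : 0 ≤ γ) (hH : 0 ≤ H) (hU : 0 < U)
    (r : S → A → ℝ) (cnt : S → A → ℝ) (hcnt : ∀ s a, 1 ≤ cnt s a)
    (Phat : S → A → S → ℝ)
    (hPnonneg : ∀ s a s', 0 ≤ Phat s a s')
    (hPsum : ∀ s a, ∑ s', Phat s a s' = 1)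
    (Q Q' : S → A → ℝ) (hQ : ∀ s a, Q s a ≤ Q' s a) (s : S) (a : A) :
    bellmanOp γ H U r cnt Phat Q s a ≤ bellmanOp γ H U r cnt Phat Q' s a := by
  have hc : (0:ℝ) < cnt s a := lt_of_lt_of_le one_pos (hcnt s a)
  have ht : 0 < U / cnt s a := div_pos hU hc
  set V := clipOp H (maxOp Q) with hV
  set V' := clipOp H (maxOp Q') with hV'
  have hVle : ∀ s', V s' ≤ V' s' := fun s' => clipOp_mono H (maxOp_mono hQ) s'
  have hoV : ∀ s₁ s₂, V s₁ ≤ V s₂ + H := fun s₁ s₂ => clipOp_osc H hH _ s₁ s₂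
  have hoV' : ∀ s₁ s₂, V' s₁ ≤ V' s₂ + H := fun s₁ s₂ => clipOp_osc H hH _ s₁ s₂
  have hp := hPnonneg s a
  have hps := hPsum s a
  have hx : 0 ≤ probDot (Phat s a) V' - probDot (Phat s a) V := by
    have : probDot (Phat s a) V ≤ probDot (Phat s a) V' :=
      Finset.sum_le_sum fun s' _ => mul_le_mul_of_nonneg_left (hVle s') (hp s')
    linarith
  have hvar := var_compare' (Phat s a) V V' hp hps hVle hoV hoV'
  have hbon := bonus_le' (U / cnt s a) H (probDot (Phat s a) V' - probDot (Phat s a) V)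
    (probVar (Phat s a) V) (probVar (Phat s a) V') ht hH hx
    (probVar_nonneg' (Phat s a) V hp hps) (probVar_nonneg' (Phat s a) V' hp hps) hvar
  have hb : bonus Phat cnt U H s a V
      ≤ (probDot (Phat s a) V' - probDot (Phat s a) V) + bonus Phat cnt U H s a V' := by
    have e1 : probVar (Phat s a) V * (U / cnt s a) = probVar (Phat s a) V * U / cnt s a :=
      (mul_div_assoc _ _ _).symm
    have e2 : probVar (Phat s a) V' * (U / cnt s a) = probVar (Phat s a) V' * U / cnt s a :=
      (mul_div_assoc _ _ _).symm
    have e3 : 32*H*(U / cnt s a) = 32*H*U / cnt s a := (mul_div_assoc _ _ _).symm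
    rw [e1, e2, e3] at hbon
    simpa [bonus] using hbon
  simp only [bellmanOp, ← hV, ← hV']
  nlinarith [mul_le_mul_of_nonneg_left hb hγ]

end Aux

/-- The iterates of the clipped optimistic empirical Bellman operator started
from zero are pointwise nondecreasing, and consequently for any iterate
`Q̂ = T̂^m(0)` with clipped value `V̂ = Clip_H(MQ̂)`, at any state `s` and any
action `a` maximizing `Q̂(s,·)` one has
`V̂(s) ≤ r(s,a) + γ·(P̂_{s,a}·V̂) + γ·b(s,a,V̂)`. -/
theorem bellmanOp_iterates_monotone
    {S A : Type*} [Fintype S] [Fintype A] [Nonempty S] [Nonempty A]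
    (γ H U : ℝ) (hγ₀ : 0 < γ) (hγ₁ : γ < 1) (hH : 0 ≤ H) (hU : 0 < U)
    (r : S → A → ℝ) (hr : ∀ s a, r s a ∈ Set.Icc (0 : ℝ) 1)
    (cnt : S → A → ℝ) (hcnt : ∀ s a, 1 ≤ cnt s a)
    (Phat : S → A → S → ℝ)
    (hPnonneg : ∀ s a s', 0 ≤ Phat s a s')
    (hPle : ∀ s a s', Phat s a s' ≤ 1)
    (hPsum : ∀ s a, ∑ s', Phat s a s' = 1) :
    (∀ k : ℕ, ∀ s a,
      (bellmanOp γ H U r cnt Phat)^[k] (fun _ _ => 0) s a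
        ≤ (bellmanOp γ H U r cnt Phat)^[k + 1] (fun _ _ => 0) s a)
    ∧
    (∀ m : ℕ, ∀ s a,
      (bellmanOp γ H U r cnt Phat)^[m] (fun _ _ => 0) s a
          = maxOp ((bellmanOp γ H U r cnt Phat)^[m] (fun _ _ => 0)) s →
      clipOp H (maxOp ((bellmanOp γ H U r cnt Phat)^[m] (fun _ _ => 0))) s
        ≤ r s a
          + γ * probDot (Phat s a)
              (clipOp H (maxOp ((bellmanOp γ H U r cnt Phat)^[m] (fun _ _ => 0))))
          + γ * bonus Phat cnt U H s a
              (clipOp H (maxOp ((bellmanOp γ H U r cnt Phat)^[m] (fun _ _ => 0))))) := by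
  have part1 : ∀ k : ℕ, ∀ s a,
      (bellmanOp γ H U r cnt Phat)^[k] (fun _ _ => 0) s a
        ≤ (bellmanOp γ H U r cnt Phat)^[k + 1] (fun _ _ => 0) s a := by
    intro k
    induction k with
    | zero =>
      intro s a
      have h0 : clipOp H (maxOp (fun (_ : S) (_ : A) => (0:ℝ))) = fun _ => (0:ℝ) := by
        have hm : maxOp (fun (_ : S) (_ : A) => (0:ℝ)) = fun _ => (0:ℝ) := by
          funext x; simp [maxOp]
        funext s'
        simp [clipOp, hm, hH]
      have e : (bellmanOp γ H U r cnt Phat)^[0 + 1] (fun _ _ => (0:ℝ)) s a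
          = r s a + γ * probDot (Phat s a) (fun _ => (0:ℝ))
            + γ * bonus Phat cnt U H s a (fun _ => (0:ℝ)) := by
        rw [zero_add, Function.iterate_one]
        unfold bellmanOp
        rw [h0]
      rw [Function.iterate_zero_apply, e]
      have hd : probDot (Phat s a) (fun _ => (0:ℝ)) = 0 := by simp [probDot]
      have hv : probVar (Phat s a) (fun _ => (0:ℝ)) = 0 := by simp [probVar, probDot]
      have hc : (0:ℝ) < cnt s a := lt_of_lt_of_le one_pos (hcnt s a)
      have hb : (0:ℝ) ≤ bonus Phat cnt U H s a (fun _ => 0) := by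
        refine le_trans ?_ (le_max_right _ _)
        · show (0:ℝ) ≤ 32*H*U / cnt s a
          positivity
      have hr0 := (hr s a).1
      nlinarith [mul_nonneg hγ₀.le hb]
    | succ n ih =>
      intro s a
      rw [Function.iterate_succ_apply', Function.iterate_succ_apply']
      exact bellmanOp_mono γ H U hγ₀.le hH hU r cnt hcnt Phat hPnonneg hPsum _ _ ih s a
  refine ⟨part1, ?_⟩
  intro m s a hmax
  set Qm := (bellmanOp γ H U r cnt Phat)^[m] (fun _ _ => (0:ℝ)) with hQm
  have h1 : clipOp H (maxOp Qm) s ≤ maxOp Qm s := min_le_left _ _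
  have h2 : maxOp Qm s = Qm s a := hmax.symm
  have h3 := part1 m s a
  rw [Function.iterate_succ_apply', ← hQm] at h3
  have h4 : bellmanOp γ H U r cnt Phat Qm s a
      = r s a + γ * probDot (Phat s a) (clipOp H (maxOp Qm))
        + γ * bonus Phat cnt U H s a (clipOp H (maxOp Qm)) := rfl
  rw [h4] at h3
  linarith [h1, h2 ▸ h1]
end
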